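/- Let Γ be a group, K ⊆ Γ a finite subset, and F ⊆ Γ a finite subset. Define the K-interior of F as int_K(F) = {γ ∈ F : γK ⊆ F}. Then |F \ int_K(F)| ≤ |K| · |FK \ F|. -/

import Mathlib

open Pointwise Finset

theorem Finset.sdiff_filter_forall_mul_mem_subset_biUnion {Γ : Type*} [Group Γ] [DecidableEq Γ]
    (K F : Finset Γ) :
    F \ F.filter (fun γ => ∀ k ∈ K, γ * k ∈ F) ⊆
      K.biUnion fun k => ((F * K) \ F).image (· * k⁻¹) := by
  intro γ hγ
  simp only [mem_sdiff, mem_filter, not_and, not_forall] at hγ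
  obtain ⟨hγF, hγ_not_interior⟩ := hγ
  obtain ⟨k, hk, hγk⟩ := hγ_not_interior hγF
  exact mem_biUnion.2 ⟨k, hk, mem_image.2
    ⟨γ * k, mem_sdiff.2 ⟨mul_mem_mul hγF hk, hγk⟩, mul_inv_cancel_right γ k⟩⟩

/-- For finite subsets `K, F` of a group `Γ`, the complement in `F` of the
`K`-interior `int_K(F) = {γ ∈ F : γK ⊆ F}` satisfies `|F \ int_K(F)| ≤ |K| ⬝ |FK \ F|`. -/
theorem card_sdiff_interior_le
    {Γ : Type*} [Group Γ] [DecidableEq Γ] (K F : Finset Γ) :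
    (F \ F.filter (fun γ => ∀ k ∈ K, γ * k ∈ F)).card ≤ K.card * ((F * K) \ F).card :=
  (card_le_card (sdiff_filter_forall_mul_mem_subset_biUnion K F)).trans
    (card_biUnion_le_card_mul _ _ _ fun _ _ => card_image_le)
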